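/- arXiv:1811.08001 — 7 statements merged into one kernel-verified Lean document; each statement's English description precedes it below -/
import Mathlib

section
/- If I is an ideal of S and N a subsemimodule of M with IM ⊆ N, then the radical of the ideal I ⊕̃ N in the expectation semiring S ⊕̃ M equals √I ⊕̃ M, i.e., (s,m) has some power in I ⊕̃ N if and only if some power of s lies in I. -/
/-! If `x ^ k` has first component in `I`, then `x ^ (2k) = x ^ k * x ^ k` lies in `I ⊕̃ N`:
the second component of a product of two elements of `I ⊕̃ M` lies in `IM ⊆ N`. -/

noncomputable instance expOpp {S M : Type*} [CommSemiring S] [AddCommMonoid M] [Module S M] :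
    Module Sᵐᵒᵖ M :=
  Module.compHom M ((RingHom.id S).fromOpposite mul_comm)

instance expCentral {S M : Type*} [CommSemiring S] [AddCommMonoid M] [Module S M] :
    IsCentralScalar S M :=
  ⟨fun _ _ => rfl⟩

namespace TrivSqZeroExt

variable {S M : Type*} [CommSemiring S] [AddCommMonoid M] [Module S M] [Module Sᵐᵒᵖ M]
  [IsCentralScalar S M] {I : Ideal S} {N : Submodule S M}

theorem snd_mul_mem_of_fst_mem (hIM : ∀ a ∈ I, ∀ m : M, a • m ∈ N)
    {y z : TrivSqZeroExt S M} (hy : y.fst ∈ I) (hz : z.fst ∈ I) : (y * z).snd ∈ N := by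
  rw [snd_mul, op_smul_eq_smul]
  exact N.add_mem (hIM _ hy _) (hIM _ hz _)

end TrivSqZeroExt

/-- If IM ⊆ N then √(I ⊕̃ N) = √I ⊕̃ M: an element of S ⊕̃ M has
some positive power in I ⊕̃ N iff some positive power of its first component lies in I. -/
theorem stmt4 (S M : Type*) [CommSemiring S] [AddCommMonoid M] [Module S M]
    (I : Ideal S) (N : Submodule S M) (hIM : ∀ a ∈ I, ∀ m : M, a • m ∈ N) :
    ∀ x : TrivSqZeroExt S M,
      (∃ k : ℕ, 1 ≤ k ∧ (x ^ k).fst ∈ I ∧ (x ^ k).snd ∈ N) ↔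
        (∃ k : ℕ, 1 ≤ k ∧ x.fst ^ k ∈ I) := by
  intro x
  constructor
  · rintro ⟨k, hk, hxk, -⟩
    exact ⟨k, hk, TrivSqZeroExt.fst_pow x k ▸ hxk⟩
  · rintro ⟨k, hk, hsk⟩
    have hxk : (x ^ k).fst ∈ I := (TrivSqZeroExt.fst_pow x k).symm ▸ hsk
    refine ⟨k + k, by omega, ?_, ?_⟩
    · rw [pow_add, TrivSqZeroExt.fst_mul]
      exact I.mul_mem_left _ hxk
    · rw [pow_add]
      exact TrivSqZeroExt.snd_mul_mem_of_fst_mem hIM hxk hxk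
end

section
/- Every subtractive prime ideal P of the expectation semiring S ⊕̃ M has the form P = 𝔭 × M, where 𝔭 is a subtractive prime ideal of S. -/
/-! Since `inr m * inr m = 0`, a prime ideal of `S ⊕̃ M` contains `0 ⊕ M`; subtractivity then
lets one cancel the `inr` part of `x = inl x.fst + inr x.snd`, so membership depends on `x.fst`
alone, and `𝔭` is the pullback of `P` along `inl`. -/

namespace TrivSqZeroExt

theorem mem_iff_inl_fst_mem {R M σ : Type*} [AddCommMonoid R] [AddCommMonoid M]
    [SetLike σ (TrivSqZeroExt R M)] [AddMemClass σ (TrivSqZeroExt R M)] {P : σ}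
    (hinr : ∀ m : M, inr m ∈ P)
    (hsub : ∀ x y : TrivSqZeroExt R M, x + y ∈ P → x ∈ P → y ∈ P) (x : TrivSqZeroExt R M) :
    x ∈ P ↔ inl x.fst ∈ P := by
  have hx : inr x.snd + inl x.fst = x := by rw [add_comm, inl_fst_add_inr_snd_eq]
  exact ⟨fun h => hsub (inr x.snd) (inl x.fst) (by rwa [hx]) (hinr x.snd),
    fun h => hx ▸ add_mem (hinr x.snd) h⟩

theorem inr_mem_of_isPrime {R M : Type*} [Semiring R] [AddCommMonoid M] [Module R M]
    [Module Rᵐᵒᵖ M] [SMulCommClass R Rᵐᵒᵖ M] {P : Ideal (TrivSqZeroExt R M)} (hP : P.IsPrime)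
    (m : M) :
    inr m ∈ P :=
  (hP.mem_or_mem (by rw [inr_mul_inr]; exact P.zero_mem)).elim id id

end TrivSqZeroExt

open TrivSqZeroExt in
/-- Every subtractive prime ideal P of S ⊕̃ M has the form
𝔭 × M for a subtractive prime ideal 𝔭 of S. -/
theorem stmt7 (S M : Type*) [CommSemiring S] [AddCommMonoid M] [Module S M]
    (P : Ideal (TrivSqZeroExt S M)) (hP : P.IsPrime)
    (hsub : ∀ x y : TrivSqZeroExt S M, x + y ∈ P → x ∈ P → y ∈ P) :
    ∃ p : Ideal S, p.IsPrime ∧ (∀ a b : S, a + b ∈ p → a ∈ p → b ∈ p) ∧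
      ∀ x : TrivSqZeroExt S M, x ∈ P ↔ x.fst ∈ p :=
  ⟨P.comap (inlHom S M), Ideal.IsPrime.comap _,
    fun a b hab ha => hsub (inl a) (inl b) (by rwa [← inl_add]) ha,
    mem_iff_inl_fst_mem (inr_mem_of_isPrime hP) hsub⟩
end

section
/- If J is a subtractive ideal of the expectation semiring S ⊕̃ M containing {0} × M, then J = I × M for some ideal I of S, namely I = {s ∈ S : ∃ m ∈ M, (s,m) ∈ J}. -/
/-! A subtractive ideal containing `{0} × M` is saturated for `fst`: if `y ∈ J` and
`x.fst = y.fst`, then `x + (0, y.snd) = y + (0, x.snd)` lies in `J`, and subtracting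
`(0, y.snd) ∈ J` leaves `x ∈ J`. Hence `J` is the preimage of its image `I` under `fst`. -/

def Ideal.IsSubtractive {R : Type*} [Semiring R] (J : Ideal R) : Prop :=
  ∀ x y : R, x + y ∈ J → x ∈ J → y ∈ J

namespace TrivSqZeroExt

theorem add_inr_snd_eq_of_fst_eq {R M : Type*} [AddMonoid R] [AddCommMonoid M]
    {x y : TrivSqZeroExt R M} (h : x.fst = y.fst) : x + inr y.snd = y + inr x.snd :=
  ext (by simp [h]) (by simp [add_comm])

theorem mem_of_fst_eq {R M : Type*} [Semiring R] [AddCommMonoid M] [Module R M]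
    [Module Rᵐᵒᵖ M] [SMulCommClass R Rᵐᵒᵖ M] {J : Ideal (TrivSqZeroExt R M)}
    (hJ : J.IsSubtractive) (hinr : ∀ m : M, inr m ∈ J)
    {x y : TrivSqZeroExt R M} (hy : y ∈ J) (h : x.fst = y.fst) : x ∈ J := by
  have hsum : inr y.snd + x ∈ J := by
    rw [add_comm, add_inr_snd_eq_of_fst_eq h]
    exact J.add_mem hy (hinr _)
  exact hJ _ _ hsum (hinr _)

theorem fstHom_surjective (R M : Type*) [CommSemiring R] [AddCommMonoid M] [Module R M]
    [Module Rᵐᵒᵖ M] [IsCentralScalar R M] : Function.Surjective (fstHom R R M) :=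
  fun r => ⟨inl r, fst_inl M r⟩

end TrivSqZeroExt

/-- A subtractive ideal J of S ⊕̃ M containing {0} × M equals
I × M, where I = {s : ∃ m, (s,m) ∈ J}. -/
theorem stmt8 (S M : Type*) [CommSemiring S] [AddCommMonoid M] [Module S M]
    (J : Ideal (TrivSqZeroExt S M))
    (hsub : ∀ x y : TrivSqZeroExt S M, x + y ∈ J → x ∈ J → y ∈ J)
    (hM : ∀ x : TrivSqZeroExt S M, x.fst = 0 → x ∈ J) :
    ∃ I : Ideal S,
      (∀ s : S, s ∈ I ↔ ∃ x ∈ J, TrivSqZeroExt.fst x = s) ∧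
      (∀ x : TrivSqZeroExt S M, x ∈ J ↔ x.fst ∈ I) := by
  have hmap (s : S) : s ∈ J.map (TrivSqZeroExt.fstHom S S M) ↔ ∃ x ∈ J, x.fst = s :=
    Ideal.mem_map_iff_of_surjective _ (TrivSqZeroExt.fstHom_surjective S M)
  refine ⟨J.map (TrivSqZeroExt.fstHom S S M), hmap,
    fun x => ⟨Ideal.mem_map_of_mem _, fun hx => ?_⟩⟩
  obtain ⟨y, hy, hfst⟩ := (hmap _).1 hx
  exact TrivSqZeroExt.mem_of_fst_eq hsub (fun m => hM _ (TrivSqZeroExt.fst_inr S m)) hy hfst.symm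
end

section
/- If the expectation semiring S ⊕̃ M is Noetherian (every ascending chain of ideals stabilizes, equivalently every ideal is finitely generated), then S is a Noetherian semiring and M is a finitely generated S-semimodule. -/
/-! The projection `fst` is a surjective ring map onto `S`, so `S` inherits the Noetherian
property. Its kernel is `0 ⊕ M`, on which `S ⊕̃ M` acts through `fst`; hence the `snd`-components
of finitely many generators of this ideal generate `M` over `S`. -/

namespace TrivSqZeroExt

section

variable {R M : Type*} [Semiring R] [AddCommMonoid M] [Module R M] [Module Rᵐᵒᵖ M]
  [SMulCommClass R Rᵐᵒᵖ M]

def inrIdeal (N : Submodule R M) : Ideal (TrivSqZeroExt R M) where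
  carrier := {x | x.fst = 0 ∧ x.snd ∈ N}
  zero_mem' := ⟨fst_zero, N.zero_mem⟩
  add_mem' := fun ⟨hx, hx'⟩ ⟨hy, hy'⟩ => ⟨by simp [hx, hy], N.add_mem hx' hy'⟩
  smul_mem' a x := fun ⟨hx, hx'⟩ => ⟨by simp [hx], by simpa [hx] using N.smul_mem a.fst hx'⟩

end

section

variable {R M : Type*} [CommSemiring R] [AddCommMonoid M] [Module R M] [Module Rᵐᵒᵖ M]
  [IsCentralScalar R M]

theorem module_finite_of_kerIdeal_fg (h : (kerIdeal R M).FG) : Module.Finite R M := by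
  classical
  obtain ⟨s, hs⟩ := h
  refine ⟨⟨s.image snd, eq_top_iff.2 fun m _ => ?_⟩⟩
  have hs_le : Ideal.span (s : Set (TrivSqZeroExt R M)) ≤
      inrIdeal (Submodule.span R ↑(s.image snd)) :=
    Ideal.span_le.2 fun x hx => by
      have hx_ker : x ∈ kerIdeal R M := hs ▸ Submodule.subset_span hx
      exact ⟨hx_ker, Submodule.subset_span (by simpa using ⟨x, hx, rfl⟩)⟩
  have hm : inr m ∈ Ideal.span (s : Set (TrivSqZeroExt R M)) := hs ▸ fst_inr R m
  simpa using (hs_le hm).2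

end

end TrivSqZeroExt

/-- If S ⊕̃ M is Noetherian then S is Noetherian and M is a
finitely generated S-semimodule. -/
theorem stmt9 (S M : Type*) [CommSemiring S] [AddCommMonoid M] [Module S M]
    (h : IsNoetherianRing (TrivSqZeroExt S M)) :
    IsNoetherianRing S ∧ Module.Finite S M :=
  ⟨isNoetherianRing_of_surjective _ _ (TrivSqZeroExt.fstHom S S M).toRingHom
      TrivSqZeroExt.fst_surjective,
    TrivSqZeroExt.module_finite_of_kerIdeal_fg (IsNoetherian.noetherian _)⟩
end

section
/- If N is a primary subsemimodule of M (N ≠ M, and sm ∈ N with m ∉ N implies sⁿM ⊆ N for some n ≥ 1), then the radical √N := √[N:M] is a prime ideal of S, where [N:M] = {s ∈ S : sM ⊆ N}. -/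
/-! The hypothesis makes `N` primary in the sense of `Submodule.IsPrimary`, and the radical of
the colon ideal of a primary submodule is prime. Since `N` is proper, `s ^ 0 = 1` never lies in
`[N : M]`, so exponents witnessing membership in that radical can be taken `≥ 1`. -/

open scoped Pointwise

namespace Submodule

variable {R M : Type*} [CommSemiring R] [AddCommMonoid M] [Module R M] {N : Submodule R M}

theorem smul_top_le_iff {r : R} : (r • ⊤ : Submodule R M) ≤ N ↔ ∀ x : M, r • x ∈ N := by
  simp [← mem_colon_iff_le, mem_colon]

theorem isPrimary_of_pow_smul_mem (hN : N ≠ ⊤)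
    (h : ∀ (r : R) (m : M), r • m ∈ N → m ∉ N → ∃ n, ∀ x : M, r ^ n • x ∈ N) :
    N.IsPrimary := by
  refine ⟨hN, fun {r m} hrm ↦ or_iff_not_imp_left.mpr fun hm ↦ ?_⟩
  obtain ⟨n, hn⟩ := h r m hrm hm
  exact ⟨n, smul_top_le_iff.mpr hn⟩

theorem mem_radical_colon_univ_iff_of_ne_top (hN : N ≠ ⊤) {r : R} :
    r ∈ (N.colon Set.univ).radical ↔ ∃ n, 1 ≤ n ∧ ∀ x : M, r ^ n • x ∈ N := by
  simp only [Ideal.mem_radical_iff, mem_colon, Set.mem_univ, true_imp_iff]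
  refine ⟨fun ⟨n, hn⟩ ↦ ⟨n, Nat.one_le_iff_ne_zero.mpr ?_, hn⟩, fun ⟨n, _, hn⟩ ↦ ⟨n, hn⟩⟩
  rintro rfl
  exact hN (eq_top_iff'.mpr fun x ↦ by simpa using hn x)

end Submodule

/-- If N is a primary subsemimodule of M, then
√N = √[N:M] is a prime ideal of S. -/
theorem stmt11 (S M : Type*) [CommSemiring S] [AddCommMonoid M] [Module S M]
    (N : Submodule S M) (hN : N ≠ ⊤)
    (hprim : ∀ (s : S) (m : M), s • m ∈ N → m ∉ N →
      ∃ n : ℕ, 1 ≤ n ∧ ∀ x : M, s ^ n • x ∈ N) :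
    ∃ P : Ideal S,
      (∀ s : S, s ∈ P ↔ ∃ n : ℕ, 1 ≤ n ∧ ∀ x : M, s ^ n • x ∈ N) ∧
      P.IsPrime := by
  have hprimary : N.IsPrimary := N.isPrimary_of_pow_smul_mem hN fun s m hsm hm ↦
    (hprim s m hsm hm).imp fun _ ↦ And.right
  exact ⟨(N.colon Set.univ).radical, fun _ ↦ N.mem_radical_colon_univ_iff_of_ne_top hN,
    hprimary.isPrime_radical_colon⟩
end

section
/- An element (s,x) of the expectation semiring S ⊕̃ M is a unit if and only if s is a unit of S and x has an additive inverse in M; that is, U(S ⊕̃ M) = U(S) × V(M). -/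
open MulOpposite

namespace TrivSqZeroExt

variable {R M : Type*} [Monoid R] [AddCommMonoid M] [DistribMulAction R M]
  [DistribMulAction Rᵐᵒᵖ M] [SMulCommClass R Rᵐᵒᵖ M]

theorem isUnit_fst_of_isUnit {x : TrivSqZeroExt R M} (hx : IsUnit x) : IsUnit x.fst :=
  hx.map ({ toFun := fst, map_one' := fst_one, map_mul' := fst_mul } : TrivSqZeroExt R M →* R)

theorem isAddUnit_snd_of_isUnit {x : TrivSqZeroExt R M} (hx : IsUnit x) : IsAddUnit x.snd := by
  obtain ⟨y, hxy, hyx⟩ := isUnit_iff_exists.mp hx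
  have hsnd : x.fst • y.snd + op y.fst • x.snd = 0 := by simpa using congrArg snd hxy
  have hfst : y.fst * x.fst = 1 := by simpa using congrArg fst hyx
  have hunit : IsAddUnit (op y.fst • x.snd) :=
    isAddUnit_iff_exists.mpr ⟨x.fst • y.snd, by rwa [add_comm], hsnd⟩
  have hx_snd : x.snd = op x.fst • op y.fst • x.snd := by
    rw [smul_smul, ← op_mul, hfst, op_one, one_smul]
  rw [hx_snd]
  exact hunit.map (DistribSMul.toAddMonoidHom M (op x.fst))

theorem isUnit_of_isUnit_fst_of_isAddUnit_snd {x : TrivSqZeroExt R M} (hr : IsUnit x.fst)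
    (hm : IsAddUnit x.snd) : IsUnit x := by
  obtain ⟨u, hu⟩ := hr
  obtain ⟨n, hmn, hnm⟩ := isAddUnit_iff_exists.mp hm
  -- `(r, m)⁻¹ = (r⁻¹, -(r⁻¹ m r⁻¹))`, with `n` playing the role of `-m`
  let y : TrivSqZeroExt R M := (↑u⁻¹, (↑u⁻¹ : R) • op (↑u⁻¹ : R) • n)
  refine isUnit_iff_exists.mpr ⟨y, ?_, ?_⟩ <;> ext
  · show x.fst * ↑u⁻¹ = 1
    rw [← hu, Units.mul_inv]
  · show x.fst • (↑u⁻¹ : R) • op (↑u⁻¹ : R) • n + op (↑u⁻¹ : R) • x.snd = 0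
    rw [← hu, smul_smul, Units.mul_inv, one_smul, ← smul_add, hnm, smul_zero]
  · show ↑u⁻¹ * x.fst = 1
    rw [← hu, Units.inv_mul]
  · show (↑u⁻¹ : R) • x.snd + op x.fst • (↑u⁻¹ : R) • op (↑u⁻¹ : R) • n = 0
    rw [← hu, ← smul_comm (↑u⁻¹ : R), smul_smul (op _), ← op_mul, Units.inv_mul, op_one,
      one_smul, ← smul_add, hmn, smul_zero]

theorem isUnit_iff_isUnit_fst_and_isAddUnit_snd {x : TrivSqZeroExt R M} :
    IsUnit x ↔ IsUnit x.fst ∧ IsAddUnit x.snd :=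
  ⟨fun hx => ⟨isUnit_fst_of_isUnit hx, isAddUnit_snd_of_isUnit hx⟩,
    fun h => isUnit_of_isUnit_fst_of_isAddUnit_snd h.1 h.2⟩

end TrivSqZeroExt

/-- (s,x) is a unit of S ⊕̃ M iff s is a unit of S and x has an
additive inverse in M. -/
theorem stmt14 (S M : Type*) [CommSemiring S] [AddCommMonoid M] [Module S M]
    (x : TrivSqZeroExt S M) :
    IsUnit x ↔ IsUnit x.fst ∧ IsAddUnit x.snd :=
  TrivSqZeroExt.isUnit_iff_isUnit_fst_and_isAddUnit_snd
end

section
/- An element (s,m) of the expectation semiring S ⊕̃ M is a zero-divisor if and only if s ∈ Z(S) ∪ Z(M); that is, Z(S ⊕̃ M) = {(s,m) : s ∈ Z(S) ∪ Z(M), m ∈ M}. -/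
/-!
If `(s, m) * (t, n) = 0` with `(t, n) ≠ 0`, then `s t = 0`, and when `t = 0` also `s n = 0` with
`n ≠ 0`. Conversely, if `s n = 0` with `n ≠ 0` then `(0, n)` annihilates `(s, m)`; if `s t = 0` with
`t ≠ 0`, then either `t m = 0` and `(t, 0)` annihilates `(s, m)`, or `(0, t m)` does.
-/

namespace TrivSqZeroExt

variable {R M : Type*} [CommSemiring R] [AddCommMonoid M] [Module R M] [Module Rᵐᵒᵖ M]
  [IsCentralScalar R M]

theorem mul_eq_zero_iff {x y : TrivSqZeroExt R M} :
    x * y = 0 ↔ x.fst * y.fst = 0 ∧ x.fst • y.snd + y.fst • x.snd = 0 := by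
  simp only [TrivSqZeroExt.ext_iff, fst_mul, snd_mul, op_smul_eq_smul, fst_zero, snd_zero]

theorem mul_inr_eq_zero_iff {x : TrivSqZeroExt R M} {m : M} :
    x * inr m = 0 ↔ x.fst • m = 0 := by
  simp [mul_eq_zero_iff]

theorem mul_inl_eq_zero_iff {x : TrivSqZeroExt R M} {r : R} :
    x * inl r = 0 ↔ x.fst * r = 0 ∧ r • x.snd = 0 := by
  simp [mul_eq_zero_iff]

theorem fst_isZeroDivisor_of_mul_eq_zero {x y : TrivSqZeroExt R M} (hy : y ≠ 0)
    (hxy : x * y = 0) :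
    (∃ t : R, t ≠ 0 ∧ x.fst * t = 0) ∨ ∃ m : M, m ≠ 0 ∧ x.fst • m = 0 := by
  obtain ⟨hfst, hsnd⟩ := mul_eq_zero_iff.mp hxy
  by_cases hy₁ : y.fst = 0
  · have hy₂ : y.snd ≠ 0 := fun h => hy (TrivSqZeroExt.ext hy₁ h)
    exact Or.inr ⟨y.snd, hy₂, by simpa [hy₁] using hsnd⟩
  · exact Or.inl ⟨y.fst, hy₁, hfst⟩

theorem exists_ne_zero_mul_eq_zero_of_smul_eq_zero {x : TrivSqZeroExt R M} {m : M} (hm : m ≠ 0)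
    (h : x.fst • m = 0) : ∃ y : TrivSqZeroExt R M, y ≠ 0 ∧ x * y = 0 :=
  ⟨inr m, fun h₀ => hm (by simpa using congrArg snd h₀), mul_inr_eq_zero_iff.mpr h⟩

theorem exists_ne_zero_mul_eq_zero_of_mul_eq_zero {x : TrivSqZeroExt R M} {t : R} (ht : t ≠ 0)
    (h : x.fst * t = 0) : ∃ y : TrivSqZeroExt R M, y ≠ 0 ∧ x * y = 0 := by
  by_cases htx : t • x.snd = 0
  · exact ⟨inl t, fun h₀ => ht (by simpa using congrArg fst h₀), mul_inl_eq_zero_iff.mpr ⟨h, htx⟩⟩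
  · refine exists_ne_zero_mul_eq_zero_of_smul_eq_zero htx ?_
    rw [smul_smul, h, zero_smul]

end TrivSqZeroExt

theorem stmt17_general (S M : Type*) [CommSemiring S] [AddCommMonoid M] [Module S M]
    (x : TrivSqZeroExt S M) :
    (∃ y : TrivSqZeroExt S M, y ≠ 0 ∧ x * y = 0) ↔
      ((∃ t : S, t ≠ 0 ∧ x.fst * t = 0) ∨ (∃ m : M, m ≠ 0 ∧ x.fst • m = 0)) := by
  constructor
  · rintro ⟨y, hy, hxy⟩
    exact TrivSqZeroExt.fst_isZeroDivisor_of_mul_eq_zero hy hxy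
  · rintro (⟨t, ht, hxt⟩ | ⟨m, hm, hxm⟩)
    · exact TrivSqZeroExt.exists_ne_zero_mul_eq_zero_of_mul_eq_zero ht hxt
    · exact TrivSqZeroExt.exists_ne_zero_mul_eq_zero_of_smul_eq_zero hm hxm

/-- For M nonzero, (s,m) is a zero-divisor of S ⊕̃ M iff
s ∈ Z(S) ∪ Z(M). -/
theorem stmt17 (S M : Type*) [CommSemiring S] [AddCommMonoid M] [Module S M]
    (hM : ∃ m : M, m ≠ 0) (x : TrivSqZeroExt S M) :
    (∃ y : TrivSqZeroExt S M, y ≠ 0 ∧ x * y = 0) ↔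
      ((∃ t : S, t ≠ 0 ∧ x.fst * t = 0) ∨ (∃ m : M, m ≠ 0 ∧ x.fst • m = 0)) :=
  stmt17_general S M x
end
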